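/- For a forest T_v rooted at a hypernode v with S(v) nonempty and Cost(T_v) > 0 (and Cost(T_w) > 0 for all w ∈ H(v)), the squared coefficient of variation of the SEI estimate satisfies: CV²(|v|·C_SEI(T_v)) = Σ_{w ∈ H(v)} [ 1 / C(|S(v)|−1, |w|−1) ] · [ r(S(v)) / r(w) ] · ( Cost(T_w) / Cost(T_v) )² · ( CV²(|w|·C_SEI(T_w)) + 1 ) − ( Cost(T_{S(v)}) / Cost(T_v) )². (Paper's Corollary 1.) -/

import Mathlib

open Finset

/-- A finite rooted tree on a finite node type `V`.  The root is its own parent,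
every non-root node has a parent whose depth is one smaller, and the root is the
unique node of depth `0`. -/
structure FinRootedTree (V : Type) [Fintype V] [DecidableEq V] where
  root : V
  parent : V → V
  depth : V → ℕ
  depth_root : depth root = 0
  parent_root : parent root = root
  depth_parent : ∀ v, v ≠ root → depth (parent v) + 1 = depth v
  eq_root_of_depth_zero : ∀ v, depth v = 0 → v = root

namespace FinRootedTree

variable {V : Type} [Fintype V] [DecidableEq V]

/-- The set of children of a node. -/
def children (T : FinRootedTree V) (x : V) : Finset V :=
  Finset.univ.filter fun w => w ≠ T.root ∧ T.parent w = x

/-- `S(v)`: the set of all children of nodes of a hypernode `v`. -/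
def succs (T : FinRootedTree V) (v : Finset V) : Finset V :=
  v.biUnion T.children

/-- The set of nodes of the subtree rooted at `x` (the descendants of `x`,
including `x` itself). -/
def desc (T : FinRootedTree V) (x : V) : Finset V :=
  Finset.univ.filter fun w =>
    x ∈ (Finset.range (T.depth w + 1)).image fun k => T.parent^[k] w

/-- `Cost(T_x)`: the total cost of the subtree rooted at `x`. -/
noncomputable def subtreeCost (T : FinRootedTree V) (c : V → ℝ) (x : V) : ℝ :=
  ∑ w ∈ T.desc x, c w

/-- `Cost(T_v)`: the total cost of the forest rooted at the hypernode `v`. -/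
noncomputable def forestCost (T : FinRootedTree V) (c : V → ℝ) (v : Finset V) : ℝ :=
  ∑ x ∈ v, T.subtreeCost c x

/-- `H(v)`: the hyperchildren of `v` for budget `B`, i.e. the subsets of `S(v)`
of size `min B |S(v)|`. -/
def hyper (T : FinRootedTree V) (B : ℕ) (v : Finset V) : Finset (Finset V) :=
  (T.succs v).powersetCard (min B (T.succs v).card)

/-- A hypernode: a nonempty set of distinct nodes, all at the same depth. -/
def IsHypernode (T : FinRootedTree V) (v : Finset V) : Prop :=
  v.Nonempty ∧ ∀ a ∈ v, ∀ b ∈ v, T.depth a = T.depth b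

/-- Expectation functional of the SEI estimator `C_SEI(T_v)` (with importance
function `r`): `seiE T c B r fuel v g` is `E[g(C_SEI(T_v))]`, defined by the
recursion of Algorithm 2, where the hypernode `w` is drawn from `H(v)` with
probability `r(w) / (r(S(v)) * C(|S(v)|-1, |w|-1))`, with enough fuel to reach
the leaves. -/
noncomputable def seiE (T : FinRootedTree V) (c : V → ℝ) (B : ℕ)
    (r : V → ℝ) : ℕ → Finset V → (ℝ → ℝ) → ℝ
  | 0, v, g => g ((∑ x ∈ v, c x) / (v.card : ℝ))
  | fuel + 1, v, g =>
      if T.succs v = ∅ then g ((∑ x ∈ v, c x) / (v.card : ℝ))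
      else
        ∑ w ∈ T.hyper B v,
          ((∑ a ∈ w, r a) /
              ((∑ a ∈ T.succs v, r a) *
                ((((T.succs v).card - 1).choose (w.card - 1) : ℕ) : ℝ))) *
            seiE T c B r fuel w fun y =>
              g ((∑ x ∈ v, c x) / (v.card : ℝ) +
                ((w.card : ℝ) / (v.card : ℝ)) *
                  ((∑ a ∈ T.succs v, r a) / (∑ a ∈ w, r a)) * y)

/-- `Var(|v| * C_SEI(T_v))`. -/
noncomputable def seiVar (T : FinRootedTree V) (c : V → ℝ) (B : ℕ) (r : V → ℝ)
    (fuel : ℕ) (v : Finset V) : ℝ :=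
  seiE T c B r fuel v (fun y => ((v.card : ℝ) * y) ^ 2) -
    (seiE T c B r fuel v fun y => (v.card : ℝ) * y) ^ 2

/-- `CV²(|v| * C_SEI(T_v)) = Var(|v| * C_SEI(T_v)) / E[|v| * C_SEI(T_v)]²`. -/
noncomputable def seiCV2 (T : FinRootedTree V) (c : V → ℝ) (B : ℕ) (r : V → ℝ)
    (fuel : ℕ) (v : Finset V) : ℝ :=
  seiVar T c B r fuel v /
    (seiE T c B r fuel v fun y => (v.card : ℝ) * y) ^ 2

/-! Conditionally on the drawn hypernode `w`, the step of the estimator reads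
`|v| C_SEI(T_v) = c(v) + (r(S(v)) / r(w)) · |w| C_SEI(T_w)`. Every node of `S(v)` lies in
exactly `C(|S(v)|-1, |w|-1)` members of `H(v)`, so the probabilities `P(w)` sum to one and
`P(w) · r(S(v)) / r(w) = 1 / C(|S(v)|-1, |w|-1)` averages the costs of the `T_w` to
`Cost(T_{S(v)})`. By induction the estimate is unbiased, `E[|v| C_SEI(T_v)] = Cost(T_v)`, and
squaring the step gives the second moment
`c(v)² + 2 c(v) Cost(T_{S(v)}) + ∑_w (r(S(v)) / r(w)) E[(|w| C_SEI(T_w))²] / C(|S(v)|-1, |w|-1)`;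
dividing by `Cost(T_v)² = (c(v) + Cost(T_{S(v)}))²` gives the formula. -/

theorem _root_.Finset.sum_powersetCard_sum {α M : Type*} [DecidableEq α] [AddCommMonoid M]
    (s : Finset α) {k : ℕ} (hk : 1 ≤ k) (f : α → M) :
    ∑ t ∈ s.powersetCard k, ∑ a ∈ t, f a = (s.card - 1).choose (k - 1) • ∑ a ∈ s, f a := by
  rw [sum_comm' (t' := s) (s' := fun a => (s.powersetCard k).filter ({a} ⊆ ·)), smul_sum]
  · refine sum_congr rfl fun a ha => ?_
    rw [sum_const, card_filter_powersetCard_subset {a} s k (singleton_subset_iff.mpr ha)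
      (by simpa using hk), card_singleton]
  · intro t a
    simp only [mem_powersetCard, mem_filter, singleton_subset_iff]
    constructor
    · rintro ⟨⟨hts, htk⟩, hat⟩
      exact ⟨⟨⟨hts, htk⟩, hat⟩, hts hat⟩
    · rintro ⟨⟨⟨hts, htk⟩, hat⟩, -⟩
      exact ⟨⟨hts, htk⟩, hat⟩

section Tree

variable (T : FinRootedTree V)

theorem depth_iterate_parent (w : V) {k : ℕ} (hk : k ≤ T.depth w) :
    T.depth (T.parent^[k] w) = T.depth w - k := by
  induction k with
  | zero => simp
  | succ k ih =>
    have hd := ih (by omega)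
    have hne : T.parent^[k] w ≠ T.root := fun h => by
      rw [h, T.depth_root] at hd
      omega
    have := T.depth_parent _ hne
    rw [Function.iterate_succ_apply']
    omega

theorem depth_lt_card (w : V) : T.depth w < Fintype.card V := by
  have hinj : Function.Injective fun k : Fin (T.depth w + 1) => T.parent^[k] w := by
    intro a b hab
    have ha := T.depth_iterate_parent w (Nat.lt_succ_iff.mp a.2)
    have hb := T.depth_iterate_parent w (Nat.lt_succ_iff.mp b.2)
    dsimp only at hab
    rw [hab] at ha
    exact Fin.ext (by omega)
  simpa using Fintype.card_le_of_injective _ hinj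

variable {T}

theorem mem_children {x y : V} : y ∈ T.children x ↔ y ≠ T.root ∧ T.parent y = x := by
  simp [children]

theorem depth_of_mem_children {x y : V} (h : y ∈ T.children x) :
    T.depth y = T.depth x + 1 := by
  obtain ⟨hy, rfl⟩ := mem_children.mp h
  exact (T.depth_parent y hy).symm

theorem exists_depth_eq_of_mem_succs {v : Finset V} {y : V} (h : y ∈ T.succs v) :
    ∃ x ∈ v, T.depth y = T.depth x + 1 := by
  obtain ⟨x, hx, hy⟩ := mem_biUnion.mp h
  exact ⟨x, hx, depth_of_mem_children hy⟩

theorem mem_desc {x w : V} : w ∈ T.desc x ↔ ∃ k ≤ T.depth w, T.parent^[k] w = x := by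
  simp [desc]

theorem depth_le_of_mem_desc {x w : V} (h : w ∈ T.desc x) : T.depth x ≤ T.depth w := by
  obtain ⟨k, hk, rfl⟩ := mem_desc.mp h
  rw [T.depth_iterate_parent w hk]
  omega

theorem desc_eq_insert_biUnion (x : V) :
    T.desc x = insert x ((T.children x).biUnion T.desc) := by
  ext w
  simp only [mem_insert, mem_biUnion]
  constructor
  · intro hw
    obtain ⟨k, hk, rfl⟩ := mem_desc.mp hw
    rcases k with _ | k
    · exact Or.inl rfl
    · -- `parent^[k] w` is the child of `parent^[k+1] w` on the path from `w`
      have hd := T.depth_iterate_parent w (k := k) (by omega)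
      refine Or.inr ⟨T.parent^[k] w, mem_children.mpr ⟨fun h => ?_, ?_⟩,
        mem_desc.mpr ⟨k, by omega, rfl⟩⟩
      · rw [h, T.depth_root] at hd
        omega
      · exact (Function.iterate_succ_apply' _ _ _).symm
  · rintro (rfl | ⟨y, hy, hw⟩)
    · exact mem_desc.mpr ⟨0, Nat.zero_le _, rfl⟩
    · obtain ⟨k, hk, rfl⟩ := mem_desc.mp hw
      have := T.depth_iterate_parent w hk
      have := depth_of_mem_children hy
      refine mem_desc.mpr ⟨k + 1, by omega, ?_⟩
      rw [Function.iterate_succ_apply', (mem_children.mp hy).2]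

theorem disjoint_desc {x y : V} (hd : T.depth x = T.depth y) (hne : x ≠ y) :
    Disjoint (T.desc x) (T.desc y) := by
  rw [disjoint_left]
  intro w hx hy
  obtain ⟨k, hk, rfl⟩ := mem_desc.mp hx
  obtain ⟨l, hl, rfl⟩ := mem_desc.mp hy
  rw [T.depth_iterate_parent w hk, T.depth_iterate_parent w hl] at hd
  exact hne (by rw [show k = l by omega])

theorem disjoint_children {x y : V} (hne : x ≠ y) : Disjoint (T.children x) (T.children y) := by
  rw [disjoint_left]
  intro z hx hy
  exact hne ((mem_children.mp hx).2.symm.trans (mem_children.mp hy).2)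

theorem subtreeCost_eq (c : V → ℝ) (x : V) :
    T.subtreeCost c x = c x + ∑ y ∈ T.children x, T.subtreeCost c y := by
  have hx : x ∉ (T.children x).biUnion T.desc := by
    simp only [mem_biUnion, not_exists, not_and]
    intro y hy hxy
    have := depth_le_of_mem_desc hxy
    have := depth_of_mem_children hy
    omega
  rw [subtreeCost, desc_eq_insert_biUnion, sum_insert hx, sum_biUnion]
  · rfl
  · intro y hy z hz hne
    exact disjoint_desc (by rw [depth_of_mem_children hy, depth_of_mem_children hz]) hne

theorem forestCost_eq_add_forestCost_succs (c : V → ℝ) (v : Finset V) :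
    T.forestCost c v = ∑ x ∈ v, c x + T.forestCost c (T.succs v) := by
  rw [forestCost, succs, forestCost, sum_biUnion fun x _ y _ hne => disjoint_children hne,
    ← sum_add_distrib]
  exact sum_congr rfl fun x _ => T.subtreeCost_eq c x

end Tree

section Hyper

variable {T : FinRootedTree V} {B : ℕ} {v w : Finset V}

theorem card_of_mem_hyper (hw : w ∈ T.hyper B v) : w.card = min B (T.succs v).card :=
  (mem_powersetCard.mp hw).2

theorem nonempty_of_mem_hyper (hB : 1 ≤ B) (hS : T.succs v ≠ ∅) (hw : w ∈ T.hyper B v) :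
    w.Nonempty := by
  have := card_pos.mpr (nonempty_of_ne_empty hS)
  rw [← card_pos, card_of_mem_hyper hw]
  omega

theorem choose_succs_pos (B : ℕ) :
    (0 : ℝ) < ((((T.succs v).card - 1).choose (min B (T.succs v).card - 1) : ℕ) : ℝ) :=
  Nat.cast_pos.mpr (Nat.choose_pos (by omega))

theorem sum_hyper_sum (hB : 1 ≤ B) (hS : T.succs v ≠ ∅) (f : V → ℝ) :
    ∑ w ∈ T.hyper B v, ∑ a ∈ w, f a =
      ((((T.succs v).card - 1).choose (min B (T.succs v).card - 1) : ℕ) : ℝ) *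
        ∑ a ∈ T.succs v, f a := by
  have := card_pos.mpr (nonempty_of_ne_empty hS)
  rw [hyper, sum_powersetCard_sum _ (by omega), nsmul_eq_mul]

noncomputable def hyperProb (T : FinRootedTree V) (r : V → ℝ) (v w : Finset V) : ℝ :=
  (∑ a ∈ w, r a) /
    ((∑ a ∈ T.succs v, r a) * ((((T.succs v).card - 1).choose (w.card - 1) : ℕ) : ℝ))

variable {r : V → ℝ}

theorem sum_hyperProb (hr : ∀ x, 0 < r x) (hB : 1 ≤ B) (hS : T.succs v ≠ ∅) :
    ∑ w ∈ T.hyper B v, T.hyperProb r v w = 1 := by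
  have hrS := sum_pos (fun a _ => hr a) (nonempty_of_ne_empty hS)
  have hC := choose_succs_pos (T := T) (v := v) B
  rw [sum_congr rfl fun w hw => by rw [hyperProb, card_of_mem_hyper hw], ← sum_div,
    sum_hyper_sum hB hS]
  field_simp

theorem hyperProb_mul_ratio (hr : ∀ x, 0 < r x) (hB : 1 ≤ B) (hS : T.succs v ≠ ∅)
    (hw : w ∈ T.hyper B v) :
    T.hyperProb r v w * ((∑ a ∈ T.succs v, r a) / ∑ a ∈ w, r a) =
      1 / ((((T.succs v).card - 1).choose (w.card - 1) : ℕ) : ℝ) := by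
  have hrS := sum_pos (fun a _ => hr a) (nonempty_of_ne_empty hS)
  have hrw := sum_pos (fun a _ => hr a) (nonempty_of_mem_hyper hB hS hw)
  rw [hyperProb]
  field_simp

theorem sum_hyper_forestCost (c : V → ℝ) (hB : 1 ≤ B) (hS : T.succs v ≠ ∅) :
    ∑ w ∈ T.hyper B v,
        1 / ((((T.succs v).card - 1).choose (w.card - 1) : ℕ) : ℝ) * T.forestCost c w =
      T.forestCost c (T.succs v) := by
  have hC := choose_succs_pos (T := T) (v := v) B
  rw [sum_congr rfl fun w hw => by rw [card_of_mem_hyper hw], ← mul_sum]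
  simp only [forestCost]
  rw [sum_hyper_sum hB hS]
  field_simp

end Hyper

/-- Depths are below `Fintype.card V`, so this says that `fuel` steps of the recursion
defining `seiE` reach the leaves below `v`. -/
def EnoughFuel (T : FinRootedTree V) (fuel : ℕ) (v : Finset V) : Prop :=
  ∀ a ∈ v, Fintype.card V ≤ fuel + T.depth a + 1

namespace EnoughFuel

variable {T : FinRootedTree V} {fuel : ℕ} {v : Finset V}

theorem of_card_le (h : Fintype.card V ≤ fuel + 1) : T.EnoughFuel fuel v :=
  fun _ _ => by omega

theorem succs_eq_empty (h : T.EnoughFuel 0 v) : T.succs v = ∅ := by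
  refine eq_empty_iff_forall_notMem.mpr fun y hy => ?_
  obtain ⟨x, hx, hd⟩ := exists_depth_eq_of_mem_succs hy
  have := T.depth_lt_card y
  have := h x hx
  omega

theorem of_mem_hyper {B : ℕ} {w : Finset V} (h : T.EnoughFuel (fuel + 1) v)
    (hw : w ∈ T.hyper B v) : T.EnoughFuel fuel w := by
  intro b hb
  obtain ⟨x, hx, hd⟩ := exists_depth_eq_of_mem_succs ((mem_powersetCard.mp hw).1 hb)
  have := h x hx
  omega

end EnoughFuel

section Estimator

variable {T : FinRootedTree V} {c : V → ℝ} {B : ℕ} {r : V → ℝ} {v : Finset V}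

theorem seiE_of_succs_eq_empty {g : ℝ → ℝ} (hS : T.succs v = ∅) :
    seiE T c B r fuel v g = g ((∑ x ∈ v, c x) / (v.card : ℝ)) := by
  cases fuel <;> simp [seiE, hS]

theorem seiE_succ {g : ℝ → ℝ} (hS : T.succs v ≠ ∅) :
    seiE T c B r (fuel + 1) v g =
      ∑ w ∈ T.hyper B v, T.hyperProb r v w *
        seiE T c B r fuel w fun y =>
          g ((∑ x ∈ v, c x) / (v.card : ℝ) +
            ((w.card : ℝ) / (v.card : ℝ)) * ((∑ a ∈ T.succs v, r a) / (∑ a ∈ w, r a)) * y) := by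
  rw [seiE, if_neg hS]
  rfl

theorem seiE_add (g h : ℝ → ℝ) :
    seiE T c B r fuel v (fun y => g y + h y) = seiE T c B r fuel v g + seiE T c B r fuel v h := by
  induction fuel generalizing v g h with
  | zero => rfl
  | succ fuel ih =>
    by_cases hS : T.succs v = ∅
    · simp only [seiE_of_succs_eq_empty hS]
    · simp only [seiE_succ hS, ih, mul_add, sum_add_distrib]

theorem seiE_const_mul (a : ℝ) (g : ℝ → ℝ) :
    seiE T c B r fuel v (fun y => a * g y) = a * seiE T c B r fuel v g := by
  induction fuel generalizing v g with
  | zero => rfl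
  | succ fuel ih =>
    by_cases hS : T.succs v = ∅
    · simp only [seiE_of_succs_eq_empty hS]
    · simp only [seiE_succ hS, ih, mul_sum]
      exact sum_congr rfl fun _ _ => by ring

theorem seiE_const (hr : ∀ x, 0 < r x) (hB : 1 ≤ B) (a : ℝ) :
    seiE T c B r fuel v (fun _ => a) = a := by
  induction fuel generalizing v with
  | zero => rfl
  | succ fuel ih =>
    by_cases hS : T.succs v = ∅
    · exact seiE_of_succs_eq_empty hS
    · rw [seiE_succ hS, sum_congr rfl fun w _ => by rw [ih], ← sum_mul, sum_hyperProb hr hB hS,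
        one_mul]

theorem seiE_succ_eq (h : T.EnoughFuel fuel v) (g : ℝ → ℝ) :
    seiE T c B r (fuel + 1) v g = seiE T c B r fuel v g := by
  induction fuel generalizing v g with
  | zero => rw [seiE_of_succs_eq_empty h.succs_eq_empty, seiE_of_succs_eq_empty h.succs_eq_empty]
  | succ fuel ih =>
    by_cases hS : T.succs v = ∅
    · rw [seiE_of_succs_eq_empty hS, seiE_of_succs_eq_empty hS]
    · rw [seiE_succ hS, seiE_succ hS]
      exact sum_congr rfl fun w hw => by rw [ih (h.of_mem_hyper hw)]

theorem seiE_succ_card_mul (hS : T.succs v ≠ ∅) (φ : ℝ → ℝ) :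
    seiE T c B r (fuel + 1) v (fun y => φ (v.card * y)) =
      ∑ w ∈ T.hyper B v, T.hyperProb r v w *
        seiE T c B r fuel w fun y =>
          φ (∑ x ∈ v, c x + (∑ a ∈ T.succs v, r a) / (∑ a ∈ w, r a) * (w.card * y)) := by
  have hv : (v.card : ℝ) ≠ 0 := by
    rw [Nat.cast_ne_zero, Ne, card_eq_zero]
    rintro rfl
    exact hS biUnion_empty
  rw [seiE_succ hS]
  refine sum_congr rfl fun w _ => congrArg _ (congrArg _ (funext fun y => congrArg φ ?_))
  field_simp

theorem seiE_card_mul_of_succs_eq_empty (hS : T.succs v = ∅) :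
    seiE T c B r fuel v (fun y => v.card * y) = T.forestCost c v := by
  rw [seiE_of_succs_eq_empty hS, forestCost_eq_add_forestCost_succs, hS, forestCost, sum_empty,
    add_zero]
  rcases v.eq_empty_or_nonempty with rfl | hv
  · simp
  · have : (v.card : ℝ) ≠ 0 := by exact_mod_cast hv.card_pos.ne'
    field_simp

theorem seiE_card_mul_eq_forestCost (hr : ∀ x, 0 < r x) (hB : 1 ≤ B)
    (h : T.EnoughFuel fuel v) :
    seiE T c B r fuel v (fun y => v.card * y) = T.forestCost c v := by
  induction fuel generalizing v with
  | zero => exact seiE_card_mul_of_succs_eq_empty h.succs_eq_empty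
  | succ fuel ih =>
    by_cases hS : T.succs v = ∅
    · exact seiE_card_mul_of_succs_eq_empty hS
    have hterm : ∀ w ∈ T.hyper B v,
        T.hyperProb r v w * seiE T c B r fuel w (fun y =>
          id (∑ x ∈ v, c x + (∑ a ∈ T.succs v, r a) / (∑ a ∈ w, r a) * (w.card * y))) =
        T.hyperProb r v w * ∑ x ∈ v, c x +
          1 / ((((T.succs v).card - 1).choose (w.card - 1) : ℕ) : ℝ) * T.forestCost c w := by
      intro w hw
      rw [← hyperProb_mul_ratio hr hB hS hw]
      simp only [id, seiE_add, seiE_const hr hB, seiE_const_mul, ih (h.of_mem_hyper hw)]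
      ring
    refine (seiE_succ_card_mul hS id).trans ?_
    rw [sum_congr rfl hterm, sum_add_distrib, ← sum_mul,
      sum_hyperProb hr hB hS, one_mul, sum_hyper_forestCost c hB hS,
      ← forestCost_eq_add_forestCost_succs]

theorem seiE_card_mul_sq (hr : ∀ x, 0 < r x) (hB : 1 ≤ B) (hS : T.succs v ≠ ∅)
    (h : T.EnoughFuel (fuel + 1) v) :
    seiE T c B r (fuel + 1) v (fun y => (v.card * y) ^ 2) =
      (∑ x ∈ v, c x) ^ 2 + 2 * (∑ x ∈ v, c x) * T.forestCost c (T.succs v) +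
        ∑ w ∈ T.hyper B v,
          1 / ((((T.succs v).card - 1).choose (w.card - 1) : ℕ) : ℝ) *
            ((∑ a ∈ T.succs v, r a) / (∑ a ∈ w, r a)) *
            seiE T c B r fuel w (fun y => (w.card * y) ^ 2) := by
  have hterm : ∀ w ∈ T.hyper B v,
      T.hyperProb r v w * seiE T c B r fuel w (fun y =>
        (∑ x ∈ v, c x + (∑ a ∈ T.succs v, r a) / (∑ a ∈ w, r a) * (w.card * y)) ^ 2) =
      T.hyperProb r v w * (∑ x ∈ v, c x) ^ 2 +
        2 * (∑ x ∈ v, c x) *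
          (1 / ((((T.succs v).card - 1).choose (w.card - 1) : ℕ) : ℝ) * T.forestCost c w) +
        1 / ((((T.succs v).card - 1).choose (w.card - 1) : ℕ) : ℝ) *
          ((∑ a ∈ T.succs v, r a) / (∑ a ∈ w, r a)) *
          seiE T c B r fuel w (fun y => (w.card * y) ^ 2) := by
    intro w hw
    set ρ := (∑ a ∈ T.succs v, r a) / (∑ a ∈ w, r a)
    have hsq : (fun y : ℝ => (∑ x ∈ v, c x + ρ * (w.card * y)) ^ 2) = fun y =>
        (∑ x ∈ v, c x) ^ 2 + (2 * (∑ x ∈ v, c x) * ρ * (w.card * y) + ρ ^ 2 * (w.card * y) ^ 2) :=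
      funext fun y => by ring
    rw [hsq, ← hyperProb_mul_ratio hr hB hS hw]
    simp only [seiE_add, seiE_const hr hB, seiE_const_mul,
      seiE_card_mul_eq_forestCost hr hB (h.of_mem_hyper hw)]
    ring
  rw [seiE_succ_card_mul hS (· ^ 2), sum_congr rfl hterm, sum_add_distrib, sum_add_distrib,
    ← sum_mul, sum_hyperProb hr hB hS, one_mul, ← mul_sum, sum_hyper_forestCost c hB hS]

theorem seiE_card_mul_sq_eq {w : Finset V}
    (h : seiE T c B r fuel w (fun y => w.card * y) ≠ 0) :
    seiE T c B r fuel w (fun y => (w.card * y) ^ 2) =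
      (seiCV2 T c B r fuel w + 1) * seiE T c B r fuel w (fun y => w.card * y) ^ 2 := by
  rw [seiCV2, seiVar]
  field_simp
  ring

end Estimator

theorem sei_cv2_general (T : FinRootedTree V) (c : V → ℝ)
    (B : ℕ) (hB : 1 ≤ B) (r : V → ℝ) (hr : ∀ x : V, 0 < r x)
    (v : Finset V) (hS : T.succs v ≠ ∅)
    (hCv : 0 < T.forestCost c v)
    (hCw : ∀ w ∈ T.hyper B v, 0 < T.forestCost c w) :
    seiCV2 T c B r (Fintype.card V) v =
      (∑ w ∈ T.hyper B v,
        (1 / ((((T.succs v).card - 1).choose (w.card - 1) : ℕ) : ℝ)) *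
          ((∑ a ∈ T.succs v, r a) / (∑ a ∈ w, r a)) *
          (T.forestCost c w / T.forestCost c v) ^ 2 *
          (seiCV2 T c B r (Fintype.card V) w + 1)) -
        (T.forestCost c (T.succs v) / T.forestCost c v) ^ 2 := by
  obtain ⟨a, -⟩ := nonempty_of_ne_empty hS
  obtain ⟨M, hM⟩ := Nat.exists_eq_add_one.mpr (Fintype.card_pos_iff.mpr ⟨a⟩)
  rw [hM]
  have hmean : ∀ u : Finset V, seiE T c B r (M + 1) u (fun y => u.card * y) =
      T.forestCost c u := fun u =>
    seiE_card_mul_eq_forestCost hr hB (EnoughFuel.of_card_le (by omega))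
  have hsq : ∀ w ∈ T.hyper B v, seiE T c B r M w (fun y => (w.card * y) ^ 2) =
      (seiCV2 T c B r (M + 1) w + 1) * T.forestCost c w ^ 2 := by
    intro w hw
    rw [← seiE_succ_eq (EnoughFuel.of_card_le hM.le),
      seiE_card_mul_sq_eq (by rw [hmean]; exact (hCw w hw).ne'), hmean]
  have hsum : ∑ w ∈ T.hyper B v,
      1 / ((((T.succs v).card - 1).choose (w.card - 1) : ℕ) : ℝ) *
        ((∑ a ∈ T.succs v, r a) / (∑ a ∈ w, r a)) *
        (T.forestCost c w / T.forestCost c v) ^ 2 * (seiCV2 T c B r (M + 1) w + 1) =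
      (∑ w ∈ T.hyper B v,
        1 / ((((T.succs v).card - 1).choose (w.card - 1) : ℕ) : ℝ) *
          ((∑ a ∈ T.succs v, r a) / (∑ a ∈ w, r a)) *
          seiE T c B r M w (fun y => (w.card * y) ^ 2)) / T.forestCost c v ^ 2 := by
    rw [sum_div]
    exact sum_congr rfl fun w hw => by rw [hsq w hw]; ring
  rw [seiCV2, seiVar, hmean, hsum, seiE_card_mul_sq hr hB hS (EnoughFuel.of_card_le (by omega)),
    forestCost_eq_add_forestCost_succs c v]
  rw [forestCost_eq_add_forestCost_succs c v] at hCv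
  field_simp
  ring

/-- Paper's Corollary 1: the squared coefficient of variation of the SEI
estimate satisfies
`CV²(|v|·C_SEI(T_v)) = ∑_{w ∈ H(v)} (1/C(|S(v)|-1,|w|-1)) · (r(S(v))/r(w)) ·
(Cost(T_w)/Cost(T_v))² · (CV²(|w|·C_SEI(T_w)) + 1) − (Cost(T_{S(v)})/Cost(T_v))²`. -/
theorem sei_cv2 (T : FinRootedTree V) (c : V → ℝ) (hc : ∀ x, 0 ≤ c x)
    (B : ℕ) (hB : 1 ≤ B) (r : V → ℝ) (hr : ∀ x : V, 0 < r x)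
    (v : Finset V) (hv : T.IsHypernode v) (hS : T.succs v ≠ ∅)
    (hCv : 0 < T.forestCost c v)
    (hCw : ∀ w ∈ T.hyper B v, 0 < T.forestCost c w) :
    seiCV2 T c B r (Fintype.card V) v =
      (∑ w ∈ T.hyper B v,
        (1 / ((((T.succs v).card - 1).choose (w.card - 1) : ℕ) : ℝ)) *
          ((∑ a ∈ T.succs v, r a) / (∑ a ∈ w, r a)) *
          (T.forestCost c w / T.forestCost c v) ^ 2 *
          (seiCV2 T c B r (Fintype.card V) w + 1)) -
        (T.forestCost c (T.succs v) / T.forestCost c v) ^ 2 :=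
  sei_cv2_general T c B hB r hr v hS hCv hCw

end FinRootedTree
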